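/- Let M and A be N×N real symmetric positive definite matrices, φ > 0, k ∈ ℕ with 1 ≤ k ≤ N, and ρ > 0. Define q_ρ(x,y) = xᵀMx + ρ‖x−y‖₂², X = {x ∈ ℝ^N : xᵀAx ≥ φ}, and Y = {y ∈ ℝ^N : yᵀy = 1, ‖y‖₀ ≤ k}. If (x*, y*) ∈ X × Y is a saddle point, i.e., x* minimizes x ↦ q_ρ(x, y*) over X and y* minimizes y ↦ q_ρ(x*, y) over Y, then ‖x*‖₂ ≤ max( √(φ / λ_min(A)), 1 ). -/

import Mathlib

open Matrix

/-- Euclidean norm on `Fin N → ℝ`. -/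
noncomputable def norm2 {N : ℕ} (x : Fin N → ℝ) : ℝ := Real.sqrt (∑ i, x i ^ 2)

/-- Number of nonzero entries of a vector (the `ℓ₀` "norm"). -/
noncomputable def card0 {N : ℕ} (x : Fin N → ℝ) : ℕ :=
  (Finset.univ.filter fun i => x i ≠ 0).card

/-- The quadratic penalty function `q_ρ(x,y) = xᵀMx + ρ‖x−y‖₂²`. -/
noncomputable def qpen {N : ℕ} (M : Matrix (Fin N) (Fin N) ℝ) (ρ : ℝ)
    (x y : Fin N → ℝ) : ℝ :=
  x ⬝ᵥ M.mulVec x + ρ * norm2 (x - y) ^ 2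

lemma norm2_nonneg {N : ℕ} (x : Fin N → ℝ) : 0 ≤ norm2 x := Real.sqrt_nonneg _

lemma norm2_sq {N : ℕ} (x : Fin N → ℝ) : norm2 x ^ 2 = x ⬝ᵥ x := by
  rw [norm2, Real.sq_sqrt (Finset.sum_nonneg fun i _ => sq_nonneg _)]
  simp [dotProduct, sq]

/-- Rayleigh lower bound: `λ_min(A) * ‖x‖² ≤ xᵀAx` for a real symmetric `A`. -/
lemma rayleigh_lower {N : ℕ} (A : Matrix (Fin N) (Fin N) ℝ) (hA : A.IsHermitian)
    (x : Fin N → ℝ) : (⨅ i, hA.eigenvalues i) * (x ⬝ᵥ x) ≤ x ⬝ᵥ A.mulVec x := by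
  rcases Nat.eq_zero_or_pos N with hN | hN
  · subst hN
    simp [dotProduct, iInf_of_empty, Real.sInf_empty]
  haveI : Nonempty (Fin N) := ⟨⟨0, hN⟩⟩
  set c : ℝ := ⨅ i, hA.eigenvalues i with hc
  have hcle : ∀ i, c ≤ hA.eigenvalues i := fun i =>
    ciInf_le (Set.Finite.bddBelow (Set.finite_range _)) i
  set U : Matrix (Fin N) (Fin N) ℝ := (hA.eigenvectorUnitary : Matrix (Fin N) (Fin N) ℝ)
    with hU
  have hUU : U * star U = 1 := (Matrix.mem_unitaryGroup_iff).mp hA.eigenvectorUnitary.2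
  set w : Fin N → ℝ := (star U).mulVec x with hw
  have hkey : x ⬝ᵥ A.mulVec x = w ⬝ᵥ (Matrix.diagonal hA.eigenvalues).mulVec w := by
    conv_lhs => rw [hA.spectral_theorem]
    have hdiag : Matrix.diagonal (RCLike.ofReal ∘ hA.eigenvalues) =
        Matrix.diagonal hA.eigenvalues := by
      congr 1
    rw [hdiag, Unitary.conjStarAlgAut_apply]
    rw [← Matrix.mulVec_mulVec, ← Matrix.mulVec_mulVec]
    rw [Matrix.dotProduct_mulVec x U _]
    congr 1
    · -- vecMul x U = w
      rw [hw, Matrix.star_eq_conjTranspose]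
      ext j
      simp [Matrix.vecMul, Matrix.mulVec, dotProduct, Matrix.conjTranspose_apply,
        mul_comm]
  have hww : w ⬝ᵥ w = x ⬝ᵥ x := by
    rw [hw, Matrix.star_eq_conjTranspose]
    rw [Matrix.dotProduct_mulVec, Matrix.vecMul_conjTranspose]
    simp only [star_trivial, Matrix.mulVec_mulVec]
    rw [← Matrix.star_eq_conjTranspose, hUU, Matrix.one_mulVec]
  rw [hkey]
  have hdot : w ⬝ᵥ (Matrix.diagonal hA.eigenvalues).mulVec w =
      ∑ i, hA.eigenvalues i * w i ^ 2 := by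
    simp [dotProduct, Matrix.mulVec_diagonal]
    apply Finset.sum_congr rfl; intro i _; ring
  rw [hdot, ← hww]
  have : c * (w ⬝ᵥ w) = ∑ i, c * w i ^ 2 := by
    simp [dotProduct, Finset.mul_sum, sq]
  rw [this]
  apply Finset.sum_le_sum
  intro i _
  exact mul_le_mul_of_nonneg_right (hcle i) (sq_nonneg _)

set_option maxHeartbeats 1000000 in
/-- a saddle point `(x*, y*)` of the penalty problem satisfies
`‖x*‖₂ ≤ max(√(φ/λ_min(A)), 1)`. -/
theorem stmt_6 {N : ℕ} (M A : Matrix (Fin N) (Fin N) ℝ) (hM : M.PosDef) (hA : A.PosDef)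
    (φ ρ : ℝ) (hφ : 0 < φ) (hρ : 0 < ρ) (k : ℕ) (hk1 : 1 ≤ k) (hkN : k ≤ N)
    (xs ys : Fin N → ℝ)
    (hxX : φ ≤ xs ⬝ᵥ A.mulVec xs)
    (hyY : ys ⬝ᵥ ys = 1 ∧ card0 ys ≤ k)
    (hxmin : ∀ z : Fin N → ℝ, φ ≤ z ⬝ᵥ A.mulVec z → qpen M ρ xs ys ≤ qpen M ρ z ys)
    (hymin : ∀ z : Fin N → ℝ, z ⬝ᵥ z = 1 → card0 z ≤ k → qpen M ρ xs ys ≤ qpen M ρ xs z) :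
    norm2 xs ≤ max (Real.sqrt (φ / (⨅ i, hA.1.eigenvalues i))) 1 := by
  by_contra hcon
  push_neg at hcon
  have hN : 0 < N := lt_of_lt_of_le hk1 hkN
  haveI : Nonempty (Fin N) := ⟨⟨0, hN⟩⟩
  set s : ℝ := norm2 xs with hs
  set c : ℝ := ⨅ i, hA.1.eigenvalues i with hc
  have hs1 : 1 < s := lt_of_le_of_lt (le_max_right _ _) hcon
  have hsφ : Real.sqrt (φ / c) < s := lt_of_le_of_lt (le_max_left _ _) hcon
  have hs0 : 0 < s := lt_trans one_pos hs1
  -- c > 0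
  have hcpos : 0 < c := by
    obtain ⟨i0, hi0⟩ := Finite.exists_min (hA.1.eigenvalues)
    have : c = hA.1.eigenvalues i0 :=
      le_antisymm (ciInf_le (Set.Finite.bddBelow (Set.finite_range _)) i0) (le_ciInf hi0)
    rw [this]; exact hA.eigenvalues_pos i0
  -- s² = xs ⬝ᵥ xs
  have hssq : s ^ 2 = xs ⬝ᵥ xs := norm2_sq xs
  -- φ < c * s²
  have hφcs : φ < c * s ^ 2 := by
    have h1 : φ / c < s ^ 2 := (Real.sqrt_lt' hs0).mp hsφ
    calc φ = c * (φ / c) := by field_simp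
    _ < c * s ^ 2 := by exact mul_lt_mul_of_pos_left h1 hcpos
  -- p := xᵀAx > φ
  set p : ℝ := xs ⬝ᵥ A.mulVec xs with hp
  have hφp : φ < p := by
    have hray : c * s ^ 2 ≤ p := by rw [hssq]; exact rayleigh_lower A hA.1 xs
    exact lt_of_lt_of_le hφcs hray
  have hppos : 0 < p := lt_trans hφ hφp
  -- xs ≠ 0, hence a := xᵀMx > 0
  have hxs0 : xs ≠ 0 := by
    intro h
    rw [hs, h, norm2] at hs1
    simp at hs1
    linarith
  have ha : 0 < xs ⬝ᵥ M.mulVec xs := by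
    have := hM.dotProduct_mulVec_pos hxs0
    simpa using this
  set a : ℝ := xs ⬝ᵥ M.mulVec xs with haa
  -- the scaling factor t
  set t : ℝ := max (Real.sqrt (φ / p)) (1 / s) with ht
  have ht0 : 0 ≤ t := le_trans (Real.sqrt_nonneg _) (le_max_left _ _)
  have ht1 : t < 1 := by
    apply max_lt
    · rw [show (1 : ℝ) = Real.sqrt 1 by simp]
      apply Real.sqrt_lt_sqrt (by positivity)
      rw [div_lt_one hppos]; exact hφp
    · rw [div_lt_one hs0]; exact hs1
  have hts : 1 ≤ t * s := by
    have : 1 / s ≤ t := le_max_right _ _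
    calc 1 = (1 / s) * s := by field_simp
    _ ≤ t * s := mul_le_mul_of_nonneg_right this (le_of_lt hs0)
  -- feasibility of t • xs
  have hfeas : φ ≤ (t • xs) ⬝ᵥ A.mulVec (t • xs) := by
    have hexp : (t • xs) ⬝ᵥ A.mulVec (t • xs) = t ^ 2 * p := by
      rw [Matrix.mulVec_smul, smul_dotProduct, dotProduct_smul]
      simp [sq]; ring
    rw [hexp]
    have h1 : Real.sqrt (φ / p) ≤ t := le_max_left _ _
    have h2 : φ / p ≤ t ^ 2 := by
      have := Real.sq_sqrt (le_of_lt (div_pos hφ hppos))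
      nlinarith [Real.sqrt_nonneg (φ / p)]
    calc φ = (φ / p) * p := by field_simp
    _ ≤ t ^ 2 * p := mul_le_mul_of_nonneg_right h2 (le_of_lt hppos)
  -- Cauchy–Schwarz: xs ⬝ᵥ ys ≤ s
  have hcs : xs ⬝ᵥ ys ≤ s := by
    have h2 := Finset.sum_mul_sq_le_sq_mul_sq Finset.univ xs ys
    have hy1 : ∑ i, ys i ^ 2 = 1 := by
      have := hyY.1; simpa [dotProduct, sq] using this
    have hx1 : ∑ i, xs i ^ 2 = s ^ 2 := by
      rw [hssq]; simp [dotProduct, sq]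
    rw [hy1, hx1, mul_one] at h2
    have : (xs ⬝ᵥ ys) ^ 2 ≤ s ^ 2 := by simpa [dotProduct] using h2
    nlinarith
  -- expand the penalty difference
  have hkey := hxmin (t • xs) hfeas
  have hqx : qpen M ρ xs ys = a + ρ * (s ^ 2 - 2 * (xs ⬝ᵥ ys) + 1) := by
    rw [qpen, norm2_sq]
    have : (xs - ys) ⬝ᵥ (xs - ys) = xs ⬝ᵥ xs - 2 * (xs ⬝ᵥ ys) + ys ⬝ᵥ ys := by
      simp only [sub_dotProduct, dotProduct_sub]
      rw [dotProduct_comm ys xs]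
      ring
    rw [this, hyY.1, ← hssq]
  have hqt : qpen M ρ (t • xs) ys =
      t ^ 2 * a + ρ * (t ^ 2 * s ^ 2 - 2 * t * (xs ⬝ᵥ ys) + 1) := by
    rw [qpen, norm2_sq]
    have h1 : (t • xs) ⬝ᵥ M.mulVec (t • xs) = t ^ 2 * a := by
      rw [Matrix.mulVec_smul, smul_dotProduct, dotProduct_smul]
      simp [sq]; ring
    have h2 : (t • xs - ys) ⬝ᵥ (t • xs - ys) =
        t ^ 2 * (xs ⬝ᵥ xs) - 2 * t * (xs ⬝ᵥ ys) + ys ⬝ᵥ ys := by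
      simp only [sub_dotProduct, dotProduct_sub, smul_dotProduct,
        dotProduct_smul, smul_eq_mul]
      rw [dotProduct_comm ys xs]
      ring
    rw [h1, h2, hyY.1, ← hssq]
  rw [hqx, hqt] at hkey
  -- contradiction via an explicit linear combination
  have h1t2 : (0:ℝ) < 1 - t ^ 2 := by have := pow_lt_one₀ ht0 ht1 (two_ne_zero); linarith
  have hB1 : 0 < (1 - t ^ 2) * a := mul_pos h1t2 ha
  have hB2 : 0 < ρ * (1 - t) * (s ^ 2 - s) := by
    apply mul_pos (mul_pos hρ (by linarith)); nlinarith [mul_pos hs0 (sub_pos.mpr hs1)]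
  have hB3 : 0 ≤ ρ * (1 - t) * (t * s ^ 2 - s) := by
    apply mul_nonneg (mul_nonneg hρ.le (by linarith))
    linarith [mul_nonneg hs0.le (sub_nonneg.mpr hts)]
  have hB4 : 0 ≤ ρ * (1 - t) * (s - xs ⬝ᵥ ys) :=
    mul_nonneg (mul_nonneg hρ.le (by linarith)) (by linarith)
  linarith [hB1, hB2, hB3, hB4]
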